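/- arXiv:1907.05823 — 5 statements merged into one kernel-verified Lean document; each statement's English description precedes it below -/
import Mathlib

section
/- Let T be the sum of d+1 i.i.d. geometric random variables each with success probability 1/n (number of trials until first success). Then for any β ∈ (0,1), Pr[T < (d+1)·β·n] ≤ (e·β)^d. -/
/-!
Off a null set every `Y i` is positive, so on the event `T ≤ N` the tuple `(Y i)` is one of
the tuples of positive integers with sum at most `N`. Their partial sums form a `(d+1)`-subset
of `{1, …, N}` determining the tuple, so there are at most `C(N, d+1)` of them, and by
independence each has probability at most `(1/n)^(d+1)`. With `N = ⌊(d+1)βn⌋` the estimate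
`C(N, k) ≤ (eN/k)^k` gives `(eβ)^(d+1)`, which is at most `(eβ)^d` when `eβ < 1`; otherwise
the bound is trivial.
-/

open MeasureTheory ProbabilityTheory

open Finset
open scoped ENNReal

namespace Fin

variable {M : Type*} {k : ℕ}

theorem partialSum_last [AddCommMonoid M] (f : Fin k → M) :
    partialSum f (last k) = ∑ i, f i := by
  rw [partialSum, val_last, List.take_of_length_le (by simp), List.sum_ofFn]

theorem strictMono_partialSum [AddMonoid M] [Preorder M] [AddLeftStrictMono M]
    {f : Fin k → M} (hf : ∀ i, 0 < f i) : StrictMono (partialSum f) :=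
  strictMono_iff_lt_succ.2 fun i => by
    rw [partialSum_succ]
    exact lt_add_of_pos_right _ (hf i)

theorem partialSum_injective [AddLeftCancelMonoid M] :
    Function.Injective (partialSum : (Fin k → M) → Fin (k + 1) → M) := by
  intro f g h
  funext i
  have := congrFun h i.succ
  rwa [partialSum_succ, partialSum_succ, congrFun h i.castSucc, add_right_inj] at this

theorem partialSum_succ_injective [AddLeftCancelMonoid M] :
    Function.Injective fun (f : Fin k → M) (j : Fin k) => partialSum f j.succ := fun _ _ h =>
  partialSum_injective <| funext fun i => i.cases (by simp) (congrFun h)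

end Fin

def posTuplesSumLE (k N : ℕ) : Finset (Fin k → ℕ) :=
  {f ∈ Fintype.piFinset fun _ => Icc 1 N | ∑ i, f i ≤ N}

section posTuplesSumLE

variable {k N : ℕ} {f : Fin k → ℕ}

theorem pos_of_mem_posTuplesSumLE (hf : f ∈ posTuplesSumLE k N) (i : Fin k) : 0 < f i := by
  simp only [posTuplesSumLE, mem_filter, Fintype.mem_piFinset, mem_Icc] at hf
  exact (hf.1 i).1

theorem image_partialSum_mem_powersetCard (hf : f ∈ posTuplesSumLE k N) :
    univ.image (fun j : Fin k => Fin.partialSum f j.succ) ∈ powersetCard k (Icc 1 N) := by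
  have hmono := Fin.strictMono_partialSum (pos_of_mem_posTuplesSumLE hf)
  refine mem_powersetCard.2 ⟨fun x hx => ?_, ?_⟩
  · obtain ⟨j, -, rfl⟩ := mem_image.1 hx
    refine mem_Icc.2 ⟨?_, ?_⟩
    · rw [Fin.partialSum_succ]
      exact (pos_of_mem_posTuplesSumLE hf j).trans_le (Nat.le_add_left _ _)
    · calc Fin.partialSum f j.succ ≤ Fin.partialSum f (Fin.last k) :=
            hmono.monotone (Fin.le_last _)
        _ = ∑ i, f i := Fin.partialSum_last f
        _ ≤ N := (mem_filter.1 hf).2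
  · exact (card_image_of_injective univ (hmono.injective.comp (Fin.succ_injective _))).trans
      (card_fin k)

theorem card_posTuplesSumLE_le : #(posTuplesSumLE k N) ≤ N.choose k := by
  calc #(posTuplesSumLE k N) ≤ #(powersetCard k (Icc 1 N)) := by
        refine card_le_card_of_injOn _ (fun f hf => image_partialSum_mem_powersetCard hf)
          fun f hf g hg hfg => Fin.partialSum_succ_injective ?_
        have hrange := congrArg (fun s : Finset ℕ => (s : Set ℕ)) hfg
        simp only [coe_image, coe_univ, Set.image_univ] at hrange
        have hmono {t} (ht : t ∈ posTuplesSumLE k N) :=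
          (Fin.strictMono_partialSum (pos_of_mem_posTuplesSumLE ht)).comp Fin.strictMono_succ
        exact ((hmono hf).range_inj (hmono hg)).1 hrange
    _ = N.choose k := by simp

end posTuplesSumLE

theorem measure_sum_le_le_choose_mul_pow {Ω : Type*} [MeasurableSpace Ω] {μ : Measure Ω}
    {k : ℕ} {Y : Fin k → Ω → ℕ} (hind : iIndepFun Y μ)
    (hzero : ∀ i, μ {ω | Y i ω = 0} = 0)
    {p : ℝ≥0∞} (hp : ∀ i j, 0 < j → μ {ω | Y i ω = j} ≤ p) (N : ℕ) :
    μ {ω | ∑ i, Y i ω ≤ N} ≤ N.choose k * p ^ k := by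
  have hcover : {ω | ∑ i, Y i ω ≤ N} ⊆
      (⋃ i, {ω | Y i ω = 0}) ∪ ⋃ f ∈ posTuplesSumLE k N, ⋂ i, Y i ⁻¹' {f i} := by
    intro ω hω
    by_cases h : ∃ i, Y i ω = 0
    · exact Or.inl (Set.mem_iUnion.2 h)
    refine Or.inr (Set.mem_biUnion (x := fun i => Y i ω) ?_ (Set.mem_iInter.2 fun i => rfl))
    push Not at h
    refine mem_filter.2 ⟨Fintype.mem_piFinset.2 fun i =>
      mem_Icc.2 ⟨Nat.one_le_iff_ne_zero.2 (h i), ?_⟩, hω⟩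
    exact (single_le_sum (fun j _ => Nat.zero_le (Y j ω)) (mem_univ i)).trans hω
  calc μ {ω | ∑ i, Y i ω ≤ N}
      ≤ μ (⋃ i, {ω | Y i ω = 0}) +
          μ (⋃ f ∈ posTuplesSumLE k N, ⋂ i, Y i ⁻¹' {f i}) :=
        (measure_mono hcover).trans (measure_union_le _ _)
    _ ≤ ∑ f ∈ posTuplesSumLE k N, μ (⋂ i, Y i ⁻¹' {f i}) := by
        rw [measure_iUnion_null hzero, zero_add]
        exact measure_biUnion_finset_le _ _
    _ ≤ ∑ _f ∈ posTuplesSumLE k N, p ^ k := by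
        refine sum_le_sum fun f hf => ?_
        rw [hind.meas_iInter fun i => ⟨{f i}, measurableSet_singleton _, rfl⟩]
        refine (prod_le_pow_card univ _ p fun i _ => ?_).trans_eq
          (by rw [card_univ, Fintype.card_fin])
        exact hp i (f i) (pos_of_mem_posTuplesSumLE hf i)
    _ ≤ N.choose k * p ^ k := by
        rw [sum_const, nsmul_eq_mul]
        gcongr
        exact_mod_cast card_posTuplesSumLE_le

theorem Nat.choose_le_exp_one_mul_div_pow (N k : ℕ) :
    (N.choose k : ℝ) ≤ (Real.exp 1 * N / k) ^ k := by
  rcases k.eq_zero_or_pos with rfl | hk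
  · simp
  have hk' : (0 : ℝ) < k := by exact_mod_cast hk
  calc (N.choose k : ℝ) ≤ N ^ k / k.factorial := Nat.choose_le_pow_div k N
    _ = (N / k) ^ k * ((k : ℝ) ^ k / k.factorial) := by
        rw [div_pow]; field_simp
    _ ≤ (N / k) ^ k * Real.exp k := by
        gcongr
        exact Real.pow_div_factorial_le_exp _ hk'.le k
    _ = (Real.exp 1 * N / k) ^ k := by
        rw [← Real.exp_one_pow, mul_div_assoc, mul_pow, mul_comm]

theorem choose_floor_mul_one_div_pow_le (k n : ℕ) {β : ℝ} (hβ : 0 ≤ β) :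
    (⌊k * β * n⌋₊.choose k : ℝ) * (1 / n) ^ k ≤ (Real.exp 1 * β) ^ k := by
  set N := ⌊k * β * n⌋₊
  have hN : (N : ℝ) ≤ β * (k * n) := by
    rw [mul_left_comm, ← mul_assoc]
    exact Nat.floor_le (by positivity)
  calc (N.choose k : ℝ) * (1 / n) ^ k ≤ (Real.exp 1 * N / k) ^ k * (1 / n) ^ k := by
        gcongr
        exact Nat.choose_le_exp_one_mul_div_pow N k
    _ = (Real.exp 1 * (N / (k * n))) ^ k := by
        rw [← mul_pow, mul_div_assoc, mul_assoc, div_mul_div_comm, mul_one]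
    _ ≤ (Real.exp 1 * β) ^ k := by
        gcongr
        exact div_le_of_le_mul₀ (by positivity) hβ hN

theorem one_sub_one_div_pow_mul_one_div_le (n k : ℕ) :
    (1 - 1 / (n : ℝ)) ^ k * (1 / n) ≤ 1 / n := by
  have hn : 1 / (n : ℝ) ≤ 1 := by simpa using Nat.cast_inv_le_one n
  exact mul_le_of_le_one_left (by positivity)
    (pow_le_one₀ (sub_nonneg.2 hn) (sub_le_self _ (by positivity)))

theorem stmt2_general {Ω : Type*} [MeasurableSpace Ω] (μ : Measure Ω) [IsProbabilityMeasure μ]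
    (n : ℕ) (d : ℕ) (Y : Fin (d + 1) → Ω → ℕ)
    (hind : iIndepFun Y μ)
    (hgeom : ∀ i, ∀ k : ℕ,
      μ {ω | Y i ω = k + 1} = ENNReal.ofReal ((1 - 1 / n) ^ k * (1 / n)))
    (hpos : ∀ i, μ {ω | Y i ω = 0} = 0)
    (β : ℝ) (hβ0 : 0 < β) :
    μ {ω | ((∑ i, Y i ω : ℕ) : ℝ) < (d + 1) * β * n} ≤
      ENNReal.ofReal ((Real.exp 1 * β) ^ d) := by
  rcases le_or_gt 1 (Real.exp 1 * β) with hβ | hβ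
  · exact prob_le_one.trans (ENNReal.one_le_ofReal.2 (one_le_pow₀ hβ))
  set N := ⌊((d + 1 : ℕ) : ℝ) * β * n⌋₊
  have hevent :
      {ω | ((∑ i, Y i ω : ℕ) : ℝ) < (d + 1) * β * n} ⊆ {ω | ∑ i, Y i ω ≤ N} :=
    fun _ hω => Nat.le_floor (by rw [Nat.cast_succ]; exact le_of_lt hω)
  have hp (i : Fin (d + 1)) (j : ℕ) (hj : 0 < j) :
      μ {ω | Y i ω = j} ≤ ENNReal.ofReal (1 / n) := by
    obtain ⟨k, rfl⟩ := Nat.exists_eq_add_of_le' hj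
    exact (hgeom i k).trans_le (ENNReal.ofReal_le_ofReal (one_sub_one_div_pow_mul_one_div_le n k))
  calc μ _ ≤ N.choose (d + 1) * ENNReal.ofReal (1 / n) ^ (d + 1) :=
        (measure_mono hevent).trans (measure_sum_le_le_choose_mul_pow hind hpos hp N)
    _ = ENNReal.ofReal (N.choose (d + 1) * (1 / n) ^ (d + 1)) := by
        rw [ENNReal.ofReal_mul (by positivity), ENNReal.ofReal_pow (by positivity),
          ENNReal.ofReal_natCast]
    _ ≤ ENNReal.ofReal ((Real.exp 1 * β) ^ (d + 1)) :=
        ENNReal.ofReal_le_ofReal (choose_floor_mul_one_div_pow_le (d + 1) n hβ0.le)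
    _ ≤ ENNReal.ofReal ((Real.exp 1 * β) ^ d) :=
        ENNReal.ofReal_le_ofReal (pow_le_pow_of_le_one (by positivity) hβ.le d.le_succ)

/-- Let `T` be the sum of `d+1` i.i.d. geometric random variables with success
probability `1/n` (counting the number of trials until and including the first
success). Then for `β ∈ (0,1)`, `Pr[T < (d+1)·β·n] ≤ (e·β)^d`. -/
theorem stmt2 {Ω : Type*} [MeasurableSpace Ω] (μ : Measure Ω) [IsProbabilityMeasure μ]
    (n : ℕ) (hn : 1 ≤ n) (d : ℕ) (Y : Fin (d + 1) → Ω → ℕ)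
    (hmeas : ∀ i, Measurable (Y i))
    (hind : iIndepFun Y μ)
    (hgeom : ∀ i, ∀ k : ℕ,
      μ {ω | Y i ω = k + 1} = ENNReal.ofReal ((1 - 1 / n) ^ k * (1 / n)))
    (hpos : ∀ i, μ {ω | Y i ω = 0} = 0)
    (β : ℝ) (hβ0 : 0 < β) (hβ1 : β < 1) :
    μ {ω | ((∑ i, Y i ω : ℕ) : ℝ) < (d + 1) * β * n} ≤
      ENNReal.ofReal ((Real.exp 1 * β) ^ d) :=
  stmt2_general μ n d Y hind hgeom hpos β hβ0
end

section
/- Let T be the sum of d+1 i.i.d. geometric random variables each with success probability 1/n. Then for any β ∈ (0,1), Pr[T > 8·max{ln(1/β), d+1}·n] ≤ β². -/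
/-!
A Chernoff bound. For `r = (1 - 1/(2n))⁻¹` a geometric variable `Y` with success probability
`1/n` has `E[r^Y] = 2`, so by independence `E[r^T] = 2^(d+1)` and Markov's inequality gives
`Pr[T > t] ≤ 2^(d+1) r^(-t)`. As `log r ≥ 1/(2n)`, for `t = 8Mn` with
`M = max(ln(1/β), d+1)` this is at most `e^M e^(-4M) ≤ e^(-2M) ≤ β²`.
-/

open MeasureTheory ProbabilityTheory
open scoped ENNReal

section
variable {Ω : Type*} [MeasurableSpace Ω] {μ : Measure Ω}

theorem lintegral_comp_eq_tsum_measure_eq {X : Ω → ℕ} (hX : Measurable X) (f : ℕ → ℝ≥0∞) :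
    ∫⁻ ω, f (X ω) ∂μ = ∑' k, f k * μ {ω | X ω = k} := by
  rw [← lintegral_map measurable_from_top hX, lintegral_countable']
  simp_rw [Measure.map_apply hX (measurableSet_singleton _)]
  rfl

/-- In `ℝ≥0∞` the geometric series sums (possibly to `∞`) for every `c`. -/
theorem lintegral_pow_of_geometric {Z : Ω → ℕ} (hZ : Measurable Z) {p : ℝ} (hp : p ≤ 1)
    (hgeom : ∀ k : ℕ, μ {ω | Z ω = k + 1} = ENNReal.ofReal ((1 - p) ^ k * p))
    (hzero : μ {ω | Z ω = 0} = 0) (c : ℝ≥0∞) :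
    ∫⁻ ω, c ^ Z ω ∂μ = c * ENNReal.ofReal p * (1 - c * ENNReal.ofReal (1 - p))⁻¹ := by
  have hq : 0 ≤ 1 - p := by linarith
  rw [lintegral_comp_eq_tsum_measure_eq hZ, tsum_eq_zero_add' ENNReal.summable, hzero, mul_zero,
    zero_add]
  simp_rw [hgeom, ENNReal.ofReal_mul (pow_nonneg hq _), ENNReal.ofReal_pow hq]
  calc ∑' k : ℕ, c ^ (k + 1) * (ENNReal.ofReal (1 - p) ^ k * ENNReal.ofReal p)
      = ∑' k : ℕ, c * ENNReal.ofReal p * (c * ENNReal.ofReal (1 - p)) ^ k := by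
        congr 1 with k; ring
    _ = _ := by rw [ENNReal.tsum_mul_left, ENNReal.tsum_geometric]

theorem lintegral_inv_one_sub_half_pow_of_geometric {Z : Ω → ℕ} (hZ : Measurable Z) {p : ℝ}
    (hp0 : 0 < p) (hp1 : p ≤ 1)
    (hgeom : ∀ k : ℕ, μ {ω | Z ω = k + 1} = ENNReal.ofReal ((1 - p) ^ k * p))
    (hzero : μ {ω | Z ω = 0} = 0) :
    ∫⁻ ω, ENNReal.ofReal (1 - p / 2)⁻¹ ^ Z ω ∂μ = 2 := by
  have hr : 0 < 1 - p / 2 := by linarith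
  have hr' : 2 - p ≠ 0 := by linarith
  have hq : (1 - p / 2)⁻¹ * (1 - p) < 1 := by
    rw [inv_mul_lt_iff₀ hr]; linarith
  rw [lintegral_pow_of_geometric hZ hp1 hgeom hzero, ← ENNReal.ofReal_mul (by positivity),
    ← ENNReal.ofReal_mul (by positivity), ← ENNReal.ofReal_one,
    ← ENNReal.ofReal_sub _ (by positivity), ← ENNReal.ofReal_inv_of_pos (sub_pos.2 hq),
    ← ENNReal.ofReal_mul (by positivity)]
  have hgap : 1 - (1 - p / 2)⁻¹ * (1 - p) = p / 2 * (1 - p / 2)⁻¹ := by field_simp; ring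
  rw [hgap, show (1 - p / 2)⁻¹ * p * (p / 2 * (1 - p / 2)⁻¹)⁻¹ = 2 by field_simp]
  simp

theorem lintegral_pow_sum_of_iIndepFun {ι : Type*} {X : ι → Ω → ℕ} (hX : ∀ i, Measurable (X i))
    (hind : iIndepFun X μ) (s : Finset ι) (c : ℝ≥0∞) :
    ∫⁻ ω, c ^ (∑ i ∈ s, X i ω) ∂μ = ∏ i ∈ s, ∫⁻ ω, c ^ X i ω ∂μ := by
  simp_rw [← Finset.prod_pow_eq_pow_sum]
  exact lintegral_prod_eq_prod_lintegral_of_indepFun s (fun i ω => c ^ X i ω)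
    (hind.comp _ fun _ => measurable_from_top) fun i => measurable_from_top.comp (hX i)

theorem measure_lt_le_lintegral_pow_div {X : Ω → ℕ} (hX : Measurable X) {r : ℝ} (hr : 1 ≤ r)
    (t : ℝ) :
    μ {ω | t < X ω} ≤ (∫⁻ ω, ENNReal.ofReal r ^ X ω ∂μ) / ENNReal.ofReal (r ^ t) := by
  have hr0 : 0 < r := by linarith
  refine le_trans (measure_mono fun ω (hω : t < X ω) => ?_)
    (meas_ge_le_lintegral_div (measurable_from_top.comp hX).aemeasurable
      (ENNReal.ofReal_pos.2 (Real.rpow_pos_of_pos hr0 t)).ne' ENNReal.ofReal_ne_top)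
  show ENNReal.ofReal (r ^ t) ≤ ENNReal.ofReal r ^ X ω
  rw [← ENNReal.ofReal_pow hr0.le, ← Real.rpow_natCast]
  exact ENNReal.ofReal_le_ofReal (Real.rpow_le_rpow_of_exponent_le hr hω.le)

end

theorem Real.exp_mul_le_inv_one_sub_rpow {a : ℝ} (ha : a < 1) {s : ℝ} (hs : 0 ≤ s) :
    Real.exp (a * s) ≤ (1 - a)⁻¹ ^ s := by
  have h1a : 0 < 1 - a := by linarith
  rw [Real.rpow_def_of_pos (inv_pos.2 h1a), Real.log_inv]
  gcongr
  linarith [Real.log_le_sub_one_of_pos h1a]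

theorem two_pow_div_inv_one_sub_rpow_le_sq {x : ℝ} (hx : 1 ≤ x) (d : ℕ) {β : ℝ} (hβ0 : 0 < β) :
    (2 : ℝ) ^ (d + 1) / (1 - 1 / x / 2)⁻¹ ^ (8 * max (Real.log (1 / β)) (d + 1) * x) ≤ β ^ 2 := by
  set L := Real.log (1 / β)
  set M := max L (d + 1)
  have hLM : L ≤ M := le_max_left _ _
  have hdM : (d : ℝ) + 1 ≤ M := le_max_right _ _
  have hlogβ : Real.log β = -L := by simp [L]
  have hden : Real.exp (4 * M) ≤ (1 - 1 / x / 2)⁻¹ ^ (8 * M * x) := by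
    have h := Real.exp_mul_le_inv_one_sub_rpow (a := 1 / x / 2) (s := 8 * M * x)
      (by rw [div_div, div_lt_one (by positivity)]; linarith) (by positivity)
    rwa [show 1 / x / 2 * (8 * M * x) = 4 * M by field_simp; ring] at h
  have hnum : (2 : ℝ) ^ (d + 1) ≤ Real.exp M :=
    calc (2 : ℝ) ^ (d + 1) ≤ Real.exp 1 ^ (d + 1) :=
          pow_le_pow_left₀ zero_le_two (by linarith [Real.add_one_le_exp 1]) _
      _ = Real.exp (d + 1) := by rw [← Real.exp_nat_mul]; push_cast; ring_nf
      _ ≤ Real.exp M := Real.exp_le_exp.2 hdM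
  calc (2 : ℝ) ^ (d + 1) / (1 - 1 / x / 2)⁻¹ ^ (8 * M * x)
      ≤ Real.exp M / Real.exp (4 * M) := div_le_div₀ (Real.exp_pos _).le hnum (Real.exp_pos _) hden
    _ = Real.exp (M - 4 * M) := (Real.exp_sub _ _).symm
    _ ≤ Real.exp (Real.log β + Real.log β) := Real.exp_le_exp.2 (by linarith)
    _ = β ^ 2 := by rw [Real.exp_add, Real.exp_log hβ0, sq]

theorem stmt3_general {Ω : Type*} [MeasurableSpace Ω] (μ : Measure Ω) [IsProbabilityMeasure μ]
    (n : ℕ) (hn : 1 ≤ n) (d : ℕ) (Y : Fin (d + 1) → Ω → ℕ)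
    (hmeas : ∀ i, Measurable (Y i))
    (hind : iIndepFun Y μ)
    (hgeom : ∀ i, ∀ k : ℕ,
      μ {ω | Y i ω = k + 1} = ENNReal.ofReal ((1 - 1 / n) ^ k * (1 / n)))
    (hpos : ∀ i, μ {ω | Y i ω = 0} = 0)
    (β : ℝ) (hβ0 : 0 < β) :
    μ {ω | ((∑ i, Y i ω : ℕ) : ℝ) > 8 * max (Real.log (1 / β)) (d + 1) * n} ≤
      ENNReal.ofReal (β ^ 2) := by
  have hn' : (1 : ℝ) ≤ n := by exact_mod_cast hn
  have hp0 : 0 < 1 / (n : ℝ) := by positivity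
  have hp1 : 1 / (n : ℝ) ≤ 1 := by rw [div_le_one (by positivity)]; exact hn'
  have hr : 1 ≤ (1 - 1 / (n : ℝ) / 2)⁻¹ := one_le_inv₀ (by linarith) |>.2 (by linarith)
  have hmgf : ∫⁻ ω, ENNReal.ofReal (1 - 1 / (n : ℝ) / 2)⁻¹ ^ (∑ i, Y i ω) ∂μ = 2 ^ (d + 1) := by
    rw [lintegral_pow_sum_of_iIndepFun hmeas hind, Finset.prod_congr rfl fun i _ =>
      lintegral_inv_one_sub_half_pow_of_geometric (hmeas i) hp0 hp1 (hgeom i) (hpos i)]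
    simp
  calc μ {ω | ((∑ i, Y i ω : ℕ) : ℝ) > 8 * max (Real.log (1 / β)) (d + 1) * n}
      ≤ 2 ^ (d + 1) / ENNReal.ofReal ((1 - 1 / (n : ℝ) / 2)⁻¹ ^
          (8 * max (Real.log (1 / β)) (d + 1) * n)) :=
        hmgf ▸ measure_lt_le_lintegral_pow_div (Finset.measurable_sum _ fun i _ => hmeas i) hr _
    _ ≤ ENNReal.ofReal (β ^ 2) := by
        rw [← ENNReal.ofReal_ofNat, ← ENNReal.ofReal_pow zero_le_two,
          ← ENNReal.ofReal_div_of_pos (Real.rpow_pos_of_pos (by linarith) _)]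
        exact ENNReal.ofReal_le_ofReal (two_pow_div_inv_one_sub_rpow_le_sq hn' d hβ0)

/-- Let `T` be the sum of `d+1` i.i.d. geometric random variables with success
probability `1/n` (counting the number of trials until and including the first
success). Then for `β ∈ (0,1)`, `Pr[T > 8·max{ln(1/β), d+1}·n] ≤ β²`. -/
theorem stmt3 {Ω : Type*} [MeasurableSpace Ω] (μ : Measure Ω) [IsProbabilityMeasure μ]
    (n : ℕ) (hn : 1 ≤ n) (d : ℕ) (Y : Fin (d + 1) → Ω → ℕ)
    (hmeas : ∀ i, Measurable (Y i))
    (hind : iIndepFun Y μ)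
    (hgeom : ∀ i, ∀ k : ℕ,
      μ {ω | Y i ω = k + 1} = ENNReal.ofReal ((1 - 1 / n) ^ k * (1 / n)))
    (hpos : ∀ i, μ {ω | Y i ω = 0} = 0)
    (β : ℝ) (hβ0 : 0 < β) (hβ1 : β < 1) :
    μ {ω | ((∑ i, Y i ω : ℕ) : ℝ) > 8 * max (Real.log (1 / β)) (d + 1) * n} ≤
      ENNReal.ofReal (β ^ 2) :=
  stmt3_general μ n hn d Y hmeas hind hgeom hpos β hβ0
end

section
/- For every real δ ∈ (0,1) and every integer i ≥ 1 there exists a constant c_i ≤ (5/(1−e^{−δ²/12}))·(24i/(e·δ²))^i such that for all integers n ≥ 1, ∑_{j=0}^{n} e^{−δ² j/12}/(n−j+1)^i ≤ c_i / n^i. -/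
/-!
With `a = δ² / 12`, the inequality `n ≤ (n - j + 1)(j + 1)` bounds the `j`-th term by
`(j + 1)^i e^{-aj} / n^i`. Applying `y^i ≤ (i/e)^i e^y` at `y = a(j + 1)/2` gives
`(j + 1)^i e^{-aj} ≤ (2i/(ea))^i e^{a/2} (e^{-a/2})^j`, so the sum is dominated by a geometric
series, and `e^{a/2} / (1 - e^{-a/2}) = (e^{a/2} + 1) / (1 - e^{-a}) ≤ 5 / (1 - e^{-a})`.
-/

open Real Finset

theorem pow_le_div_exp_one_pow_mul_exp (k : ℕ) {x : ℝ} (hx : 0 ≤ x) :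
    x ^ k ≤ (k / exp 1) ^ k * exp x := by
  rcases k.eq_zero_or_pos with rfl | hk
  · simpa using one_le_exp hx
  have hk' : (0 : ℝ) < k := by exact_mod_cast hk
  have hbase : x / k * exp 1 ≤ exp (x / k) := by
    have := add_one_le_exp (x / k - 1)
    rw [exp_sub] at this
    rw [← le_div_iff₀ (exp_pos 1)]
    linarith
  calc x ^ k = (k / exp 1) ^ k * (x / k * exp 1) ^ k := by
        rw [← mul_pow]; congr 1; field_simp
    _ ≤ (k / exp 1) ^ k * exp (x / k) ^ k := by gcongr
    _ = (k / exp 1) ^ k * exp x := by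
        rw [← exp_nat_mul, mul_div_cancel₀ x hk'.ne']

theorem Nat.le_sub_add_one_mul_add_one (n j : ℕ) : n ≤ (n - j + 1) * (j + 1) := by
  rcases le_or_gt j n with h | h
  · obtain ⟨m, rfl⟩ := Nat.exists_eq_add_of_le h
    rw [Nat.add_sub_cancel_left]; nlinarith
  · rw [Nat.sub_eq_zero_of_le h.le]; omega

theorem pow_mul_exp_neg_le {a : ℝ} (ha : 0 < a) (k j : ℕ) :
    ((j : ℝ) + 1) ^ k * exp (-a * j) ≤
      (2 * k / (exp 1 * a)) ^ k * exp (a / 2) * exp (-a / 2) ^ j := by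
  have hx : 0 ≤ a * (j + 1) / 2 := by positivity
  calc ((j : ℝ) + 1) ^ k * exp (-a * j)
      = (2 / a) ^ k * (a * (j + 1) / 2) ^ k * exp (-a * j) := by
        rw [← mul_pow]; congr 2; field_simp
    _ ≤ (2 / a) ^ k * ((k / exp 1) ^ k * exp (a * (j + 1) / 2)) * exp (-a * j) := by
        gcongr; exact pow_le_div_exp_one_pow_mul_exp k hx
    _ = (2 / a * (k / exp 1)) ^ k * (exp (a * (j + 1) / 2) * exp (-a * j)) := by
        rw [mul_pow]; ring
    _ = (2 * k / (exp 1 * a)) ^ k * exp (a / 2) * exp (-a / 2) ^ j := by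
        have hc : 2 / a * (k / exp 1) = 2 * k / (exp 1 * a) := by field_simp
        have he : exp (a * (j + 1) / 2) * exp (-a * j) = exp (a / 2) * exp (-a / 2) ^ j := by
          rw [← exp_nat_mul, ← exp_add, ← exp_add]; ring_nf
        rw [hc, he, mul_assoc]

theorem sum_pow_mul_exp_neg_le {a : ℝ} (ha : 0 < a) (k N : ℕ) :
    ∑ j ∈ range N, ((j : ℝ) + 1) ^ k * exp (-a * j) ≤
      (2 * k / (exp 1 * a)) ^ k * (exp (a / 2) / (1 - exp (-a / 2))) := by
  have hr : exp (-a / 2) < 1 := exp_lt_one_iff.mpr (by linarith)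
  calc ∑ j ∈ range N, ((j : ℝ) + 1) ^ k * exp (-a * j)
      ≤ ∑ j ∈ range N, (2 * k / (exp 1 * a)) ^ k * exp (a / 2) * exp (-a / 2) ^ j :=
        sum_le_sum fun j _ => pow_mul_exp_neg_le ha k j
    _ = (2 * k / (exp 1 * a)) ^ k * exp (a / 2) * ∑ j ∈ range N, exp (-a / 2) ^ j := by
        rw [mul_sum]
    _ ≤ (2 * k / (exp 1 * a)) ^ k * exp (a / 2) * (1 / (1 - exp (-a / 2))) := by
        have hgeom := geom_sum_Ico_le_of_lt_one (m := 0) (n := N) (exp_pos (-a / 2)).le hr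
        rw [← range_eq_Ico, pow_zero] at hgeom
        gcongr
    _ = _ := by ring

theorem exp_half_div_one_sub_exp_neg_half_le {a : ℝ} (ha : 0 < a) (ha2 : a ≤ 2) :
    exp (a / 2) / (1 - exp (-a / 2)) ≤ 5 / (1 - exp (-a)) := by
  have hr : exp (-a / 2) < 1 := exp_lt_one_iff.mpr (by linarith)
  have hsq : exp (-a) = exp (-a / 2) ^ 2 := by rw [← exp_nat_mul]; ring_nf
  have hinv : exp (a / 2) * exp (-a / 2) = 1 := by rw [← exp_add]; ring_nf; exact exp_zero
  have he : exp (a / 2) ≤ 4 := by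
    have := exp_one_lt_d9
    have := exp_le_exp.mpr (show a / 2 ≤ 1 by linarith)
    linarith
  rw [hsq, div_le_div_iff₀ (by linarith) (by nlinarith [exp_pos (-a / 2)])]
  nlinarith [exp_pos (-a / 2)]

theorem sum_exp_neg_mul_div_pow_le {a : ℝ} (ha : 0 < a) (k : ℕ) {n : ℕ} (hn : 0 < n) :
    ∑ j ∈ range (n + 1), exp (-a * j) / ((n - j + 1 : ℕ) : ℝ) ^ k ≤
      (2 * k / (exp 1 * a)) ^ k * (exp (a / 2) / (1 - exp (-a / 2))) / (n : ℝ) ^ k := by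
  have hnk : (0 : ℝ) < (n : ℝ) ^ k := by positivity
  have hterm : ∀ j ∈ range (n + 1), exp (-a * j) / ((n - j + 1 : ℕ) : ℝ) ^ k ≤
      ((j : ℝ) + 1) ^ k * exp (-a * j) / (n : ℝ) ^ k := by
    intro j _
    have hle : (n : ℝ) ^ k ≤ ((n - j + 1 : ℕ) : ℝ) ^ k * ((j : ℝ) + 1) ^ k := by
      rw [← mul_pow]; gcongr; exact_mod_cast Nat.le_sub_add_one_mul_add_one n j
    rw [div_le_div_iff₀ (by positivity) hnk]
    nlinarith [exp_pos (-a * j)]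
  calc _ ≤ ∑ j ∈ range (n + 1), ((j : ℝ) + 1) ^ k * exp (-a * j) / (n : ℝ) ^ k := sum_le_sum hterm
    _ = (∑ j ∈ range (n + 1), ((j : ℝ) + 1) ^ k * exp (-a * j)) / (n : ℝ) ^ k := by rw [sum_div]
    _ ≤ _ := by gcongr; exact sum_pow_mul_exp_neg_le ha k (n + 1)

theorem stmt4_general (δ : ℝ) (hδ0 : 0 < δ) (hδ1 : δ < 1) (i : ℕ) :
    ∃ c : ℝ, c ≤ (5 / (1 - Real.exp (-δ ^ 2 / 12))) * (24 * i / (Real.exp 1 * δ ^ 2)) ^ i ∧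
      ∀ n : ℕ, 1 ≤ n →
        ∑ j ∈ Finset.range (n + 1),
          Real.exp (-δ ^ 2 * j / 12) / ((n - j + 1 : ℕ) : ℝ) ^ i ≤ c / (n : ℝ) ^ i := by
  set a := δ ^ 2 / 12 with ha_def
  have ha : 0 < a := by positivity
  have ha2 : a ≤ 2 := by nlinarith
  refine ⟨(2 * i / (exp 1 * a)) ^ i * (exp (a / 2) / (1 - exp (-a / 2))), ?_, fun n hn => ?_⟩
  · have hK : 2 * i / (exp 1 * a) = 24 * i / (exp 1 * δ ^ 2) := by
      rw [ha_def]; field_simp; ring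
    rw [hK, mul_comm, show -δ ^ 2 / 12 = -a by ring]
    exact mul_le_mul_of_nonneg_right (exp_half_div_one_sub_exp_neg_half_le ha ha2) (by positivity)
  · have hexp : ∀ j : ℕ, -δ ^ 2 * j / 12 = -a * j := fun j => by ring
    simpa only [hexp] using sum_exp_neg_mul_div_pow_le ha i hn

/-- For every `δ ∈ (0,1)` and every integer `i ≥ 1` there exists a constant
`c_i ≤ (5/(1−e^{−δ²/12}))·(24i/(e·δ²))^i` such that for all `n ≥ 1`,
`∑_{j=0}^{n} e^{−δ² j/12}/(n−j+1)^i ≤ c_i / n^i`. -/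
theorem stmt4 (δ : ℝ) (hδ0 : 0 < δ) (hδ1 : δ < 1) (i : ℕ) (hi : 1 ≤ i) :
    ∃ c : ℝ, c ≤ (5 / (1 - Real.exp (-δ ^ 2 / 12))) * (24 * i / (Real.exp 1 * δ ^ 2)) ^ i ∧
      ∀ n : ℕ, 1 ≤ n →
        ∑ j ∈ Finset.range (n + 1),
          Real.exp (-δ ^ 2 * j / 12) / ((n - j + 1 : ℕ) : ℝ) ^ i ≤ c / (n : ℝ) ^ i :=
  stmt4_general δ hδ0 hδ1 i
end

section
/- Let X = ∑_{i=1}^m X_i where X_i ~ Exp(a_i) are independent exponential random variables, μ = E[X], and a = min_i a_i. Then for any λ ≥ 1, Pr[X ≥ λμ] ≤ λ^{−1}·e^{−aμ(λ−1−ln λ)}. -/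
/-!
Split off the summand `X i₀` with the smallest rate `a = a i₀` and write the rest as `Y`.
Conditioning on `Y` and using the exact tail `Pr[X i₀ ≥ c] = e^{-ac}` gives, for `0 ≤ t ≤ a`,
`Pr[X ≥ x] ≤ e^{-tx} E[e^{tY}] = e^{-tx} ∏_{j ≠ i₀} a_j / (a_j - t)`. Bernoulli's inequality
bounds each factor by `λ^{a / a_j}` when `t = a (1 - λ⁻¹)`, and `∑_{j ≠ i₀} a / a_j = aμ - 1`.
Compared with the plain Chernoff bound, keeping `X i₀` out of the moment generating function
saves the factor `λ⁻¹`.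
-/

open MeasureTheory ProbabilityTheory Real Set

lemma div_sub_mul_one_sub_inv_le_rpow {a r l : ℝ} (ha : 0 < a) (har : a ≤ r) (hl : 1 ≤ l) :
    r / (r - a * (1 - l⁻¹)) ≤ l ^ (a / r) := by
  have hr : 0 < r := ha.trans_le har
  have hl0 : 0 < l := by linarith
  have hu0 : 0 ≤ a / r := by positivity
  have hu1 : a / r ≤ 1 := (div_le_one hr).2 har
  have hbern := rpow_one_add_le_one_add_mul_self (s := l⁻¹ - 1)
    (by linarith [inv_nonneg.2 hl0.le]) hu0 hu1
  have hlu : 0 < l ^ (a / r) := by positivity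
  rw [add_sub_cancel, inv_rpow hl0.le, inv_le_iff_one_le_mul₀' hlu] at hbern
  have hden : 0 < r - a * (1 - l⁻¹) := by
    have : 0 < l⁻¹ := by positivity
    nlinarith
  rw [div_le_iff₀ hden]
  calc r = r * 1 := by ring
    _ ≤ r * (l ^ (a / r) * (1 + a / r * (l⁻¹ - 1))) := by gcongr
    _ = l ^ (a / r) * (r - a * (1 - l⁻¹)) := by field_simp; ring

namespace ProbabilityTheory

variable {r t : ℝ}

lemma expMeasure_Ici (hr : 0 < r) {c : ℝ} (hc : 0 ≤ c) :
    expMeasure r (Ici c) = ENNReal.ofReal (exp (-(r * c))) := by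
  have := isProbabilityMeasure_expMeasure hr
  have : NullSingletonClass (expMeasure r) := nullSingletonClass_withDensity _
  rw [← measure_congr Ioi_ae_eq_Ici, ← measure_cdf (expMeasure r),
    StieltjesFunction.measure_Ioi _ (tendsto_cdf_atTop _), cdf_expMeasure_eq hr, if_pos hc,
    sub_sub_cancel]

lemma expMeasure_Ici_le (hr : 0 < r) (ht : 0 ≤ t) (htr : t ≤ r) (c : ℝ) :
    expMeasure r (Ici c) ≤ ENNReal.ofReal (exp (-(t * c))) := by
  rcases le_or_gt 0 c with hc | hc
  · rw [expMeasure_Ici hr hc]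
    gcongr
  · have := isProbabilityMeasure_expMeasure hr
    exact prob_le_one.trans (ENNReal.one_le_ofReal.2 (one_le_exp (by nlinarith)))

lemma lintegral_exp_mul_expMeasure (hr : 0 < r) (htr : t < r) :
    ∫⁻ x, ENNReal.ofReal (exp (t * x)) ∂expMeasure r = ENNReal.ofReal (r / (r - t)) := by
  have hrt : 0 < r - t := sub_pos.2 htr
  have hdens : ∀ x, exponentialPDF r x * ENNReal.ofReal (exp (t * x))
      = ENNReal.ofReal (r / (r - t)) * exponentialPDF (r - t) x := by
    intro x
    rcases lt_or_ge x 0 with hx | hx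
    · simp [exponentialPDF_of_neg hx]
    · rw [exponentialPDF_of_nonneg hx, exponentialPDF_of_nonneg hx,
        ← ENNReal.ofReal_mul (by positivity), ← ENNReal.ofReal_mul (by positivity)]
      congr 1
      rw [mul_assoc, ← exp_add]
      field_simp
      ring_nf
  rw [expMeasure, gammaMeasure, lintegral_withDensity_eq_lintegral_mul₀
    (f := gammaPDF 1 r) (measurable_gammaPDFReal 1 r).ennreal_ofReal.aemeasurable (by fun_prop)]
  refine (lintegral_congr fun x => hdens x).trans ?_
  rw [lintegral_const_mul (f := exponentialPDF (r - t)) _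
      (measurable_exponentialPDFReal (r - t)).ennreal_ofReal,
    lintegral_exponentialPDF_eq_one hrt, mul_one]

variable {Ω : Type*} [MeasurableSpace Ω] {P : Measure Ω}

lemma IndepFun.measure_le_add_le_mul_lintegral_exp [IsFiniteMeasure P] {Y T : Ω → ℝ}
    (hY : Measurable Y) (hT : Measurable T) (hYT : IndepFun Y T P) {t : ℝ}
    (htail : ∀ c, P.map T (Ici c) ≤ ENNReal.ofReal (exp (-(t * c)))) (x : ℝ) :
    P {ω | x ≤ Y ω + T ω} ≤
      ENNReal.ofReal (exp (-(t * x))) * ∫⁻ ω, ENNReal.ofReal (exp (t * Y ω)) ∂P := by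
  have hS : MeasurableSet {q : ℝ × ℝ | x ≤ q.1 + q.2} :=
    measurableSet_le measurable_const (by fun_prop)
  calc P {ω | x ≤ Y ω + T ω} = (P.map Y).prod (P.map T) {q | x ≤ q.1 + q.2} := by
        rw [← (indepFun_iff_map_prod_eq_prod_map_map hY.aemeasurable hT.aemeasurable).1 hYT,
          Measure.map_apply (hY.prodMk hT) hS]
        rfl
    _ = ∫⁻ y, P.map T (Ici (x - y)) ∂P.map Y := by
        rw [Measure.prod_apply hS]
        refine lintegral_congr fun y => congrArg _ ?_
        ext s
        exact (sub_le_iff_le_add' (α := ℝ)).symm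
    _ ≤ ∫⁻ y, ENNReal.ofReal (exp (-(t * x))) * ENNReal.ofReal (exp (t * y)) ∂P.map Y := by
        refine lintegral_mono fun y => (htail _).trans_eq ?_
        rw [← ENNReal.ofReal_mul (exp_nonneg _), ← exp_add]
        ring_nf
    _ = _ := by
        rw [lintegral_const_mul _ (by fun_prop), lintegral_map (by fun_prop) hY]

lemma iIndepFun.lintegral_exp_mul_sum {ι : Type*} {X : ι → Ω → ℝ} (hX : iIndepFun X P)
    (hmeas : ∀ i, Measurable (X i)) (s : Finset ι) (t : ℝ) :
    ∫⁻ ω, ENNReal.ofReal (exp (t * ∑ i ∈ s, X i ω)) ∂P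
      = ∏ i ∈ s, ∫⁻ ω, ENNReal.ofReal (exp (t * X i ω)) ∂P := by
  have hexp : Measurable fun x : ℝ => ENNReal.ofReal (exp (t * x)) := by fun_prop
  have hprod := lintegral_prod_eq_prod_lintegral_of_indepFun s _ (hX.comp _ fun _ => hexp)
    fun i => hexp.comp (hmeas i)
  simp only [Function.comp_apply] at hprod
  simp_rw [← hprod, Finset.mul_sum, exp_sum, ENNReal.ofReal_prod_of_nonneg fun i _ => exp_nonneg _]

lemma iIndepFun.lintegral_exp_mul_sum_of_map_eq_expMeasure {ι : Type*} {X : ι → Ω → ℝ}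
    {a : ι → ℝ} (hX : iIndepFun X P) (hmeas : ∀ i, Measurable (X i))
    (hdist : ∀ i, P.map (X i) = expMeasure (a i)) {s : Finset ι} (ha : ∀ i ∈ s, 0 < a i)
    {t : ℝ} (hts : ∀ i ∈ s, t < a i) :
    ∫⁻ ω, ENNReal.ofReal (exp (t * ∑ i ∈ s, X i ω)) ∂P
      = ∏ i ∈ s, ENNReal.ofReal (a i / (a i - t)) := by
  rw [hX.lintegral_exp_mul_sum hmeas]
  refine Finset.prod_congr rfl fun i hi => ?_
  rw [← lintegral_exp_mul_expMeasure (ha i hi) (hts i hi), ← hdist i,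
    lintegral_map (by fun_prop) (hmeas i)]

lemma iIndepFun.lintegral_exp_mul_sum_le_rpow_of_map_eq_expMeasure {ι : Type*}
    {X : ι → Ω → ℝ} {a : ι → ℝ} (hX : iIndepFun X P) (hmeas : ∀ i, Measurable (X i))
    (hdist : ∀ i, P.map (X i) = expMeasure (a i)) {s : Finset ι} {b l : ℝ} (hb : 0 < b)
    (hba : ∀ i ∈ s, b ≤ a i) (hl : 1 ≤ l) :
    ∫⁻ ω, ENNReal.ofReal (exp (b * (1 - l⁻¹) * ∑ i ∈ s, X i ω)) ∂P
      ≤ ENNReal.ofReal (l ^ ∑ i ∈ s, b / a i) := by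
  have hl0 : 0 < l := by linarith
  have hts : ∀ i ∈ s, b * (1 - l⁻¹) < a i := fun i hi =>
    (mul_lt_of_lt_one_right hb (sub_lt_self 1 (inv_pos.2 hl0))).trans_le (hba i hi)
  rw [hX.lintegral_exp_mul_sum_of_map_eq_expMeasure hmeas hdist
      (fun i hi => hb.trans_le (hba i hi)) hts,
    rpow_sum_of_pos hl0, ENNReal.ofReal_prod_of_nonneg fun i _ => by positivity]
  gcongr with i hi
  exact div_sub_mul_one_sub_inv_le_rpow hb (hba i hi) hl

end ProbabilityTheory

/-- (Janson) Let `X = ∑_{i=1}^m X_i` with `X_i ~ Exp(a_i)` independent,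
`μ = E[X] = ∑_i 1/a_i` and `a = min_i a_i`. For any `λ ≥ 1`,
`Pr[X ≥ λμ] ≤ λ⁻¹·e^{−aμ(λ−1−ln λ)}`. -/
theorem stmt11 {Ω : Type*} [MeasurableSpace Ω] (P : Measure Ω) [IsProbabilityMeasure P]
    (m : ℕ) [NeZero m] (a : Fin m → ℝ) (ha : ∀ i, 0 < a i) (X : Fin m → Ω → ℝ)
    (hmeas : ∀ i, Measurable (X i))
    (hind : iIndepFun X P)
    (hdist : ∀ i, Measure.map (X i) P = expMeasure (a i))
    (μ aa : ℝ) (hμ : μ = ∑ i, 1 / a i)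
    (haa : aa = Finset.univ.inf' Finset.univ_nonempty a)
    (lam : ℝ) (hlam : 1 ≤ lam) :
    P {ω | lam * μ ≤ ∑ i, X i ω} ≤
      ENNReal.ofReal (lam⁻¹ * Real.exp (-(aa * μ * (lam - 1 - Real.log lam)))) := by
  obtain ⟨i₀, -, hi₀⟩ := Finset.exists_mem_eq_inf' Finset.univ_nonempty a
  have haa_le : ∀ i, aa ≤ a i := fun i => haa ▸ Finset.inf'_le a (Finset.mem_univ i)
  rw [hi₀] at haa
  subst haa
  have hlam0 : 0 < lam := by linarith
  set t := a i₀ * (1 - lam⁻¹) with ht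
  set s := Finset.univ.erase i₀
  have hYT : IndepFun (fun ω => ∑ j ∈ s, X j ω) (X i₀) P := by
    have h := hind.indepFun_finsetSum_of_notMem hmeas (Finset.notMem_erase i₀ Finset.univ)
    rwa [Finset.sum_fn] at h
  have htail (c : ℝ) : P.map (X i₀) (Ici c) ≤ ENNReal.ofReal (exp (-(t * c))) :=
    hdist i₀ ▸ expMeasure_Ici_le (ha i₀)
      (mul_nonneg (ha i₀).le (sub_nonneg.2 (inv_le_one_of_one_le₀ hlam)))
      (mul_le_of_le_one_right (ha i₀).le (sub_le_self 1 (inv_nonneg.2 hlam0.le))) c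
  have hexponent : ∑ j ∈ s, a i₀ / a j = a i₀ * μ - 1 := by
    rw [Finset.sum_erase_eq_sub (Finset.mem_univ i₀), div_self (ha i₀).ne', hμ, Finset.mul_sum]
    simp only [mul_one_div]
  simp_rw [← Finset.sum_erase_add _ _ (Finset.mem_univ i₀)]
  calc P {ω | lam * μ ≤ ∑ j ∈ s, X j ω + X i₀ ω}
      ≤ ENNReal.ofReal (exp (-(t * (lam * μ)))) *
          ∫⁻ ω, ENNReal.ofReal (exp (t * ∑ j ∈ s, X j ω)) ∂P :=
        hYT.measure_le_add_le_mul_lintegral_exp (by fun_prop) (hmeas i₀) htail _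
    _ ≤ ENNReal.ofReal (exp (-(t * (lam * μ)))) * ENNReal.ofReal (lam ^ (a i₀ * μ - 1)) := by
        rw [← hexponent]
        gcongr
        exact hind.lintegral_exp_mul_sum_le_rpow_of_map_eq_expMeasure hmeas hdist (ha i₀)
          (fun j _ => haa_le j) hlam
    _ = _ := by
        rw [← ENNReal.ofReal_mul (exp_nonneg _), rpow_def_of_pos hlam0, ← exp_add,
          ← exp_log (inv_pos.2 hlam0), ← exp_add, log_inv, ht]
        congr 2
        field_simp
        ring
end

section
/- Let X = ∑_{i=1}^m X_i where X_i ~ Exp(a_i) are independent exponential random variables, μ = E[X], and a = min_i a_i. Then for any 0 < λ ≤ 1, Pr[X ≤ λμ] ≤ e^{−aμ(λ−1−ln λ)}. -/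
/-!
Chernoff's bound with the parameter `t = a (1 - λ⁻¹) ≤ 0`. The mgf of `Exp(aᵢ)` at `t` is
`aᵢ / (aᵢ - t) = (1 + (a / aᵢ) (λ⁻¹ - 1))⁻¹`, and since `a / aᵢ ≤ 1`, Bernoulli's inequality
`(1 + u) ^ p ≤ 1 + p u` bounds it by `λ ^ (a / aᵢ)`. The product over `i` is `λ ^ (a μ)`, and
`e^{-t λ μ} = e^{a μ (1 - λ)}`.
-/

open MeasureTheory ProbabilityTheory Real Set
open scoped ENNReal

lemma exponentialPDFReal_eq (r x : ℝ) :
    exponentialPDFReal r x = if 0 ≤ x then r * exp (-(r * x)) else 0 := by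
  simp only [exponentialPDFReal, gammaPDFReal, rpow_one, Gamma_one, div_one, sub_self, rpow_zero,
    mul_one]

section ExponentialDistribution

variable {r t : ℝ}

lemma integral_exp_mul_expMeasure (hr : 0 < r) (ht : t < r) :
    ∫ x, exp (t * x) ∂expMeasure r = r / (r - t) := by
  have hdensity : (fun x ↦ (exponentialPDFReal r x).toNNReal • exp (t * x)) =
      (Ici 0).indicator fun x ↦ r * exp ((t - r) * x) := by
    funext x
    rw [NNReal.smul_def, smul_eq_mul, exponentialPDFReal_eq]
    by_cases hx : 0 ≤ x
    · rw [if_pos hx, indicator_of_mem (mem_Ici.mpr hx), Real.coe_toNNReal _ (by positivity),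
        mul_assoc, ← exp_add]
      ring_nf
    · rw [if_neg hx, indicator_of_notMem (by simpa using hx)]
      simp
  change ∫ x, exp (t * x) ∂volume.withDensity (fun x ↦ ((exponentialPDFReal r x).toNNReal : ℝ≥0∞))
    = _
  rw [integral_withDensity_eq_integral_smul (measurable_exponentialPDFReal r).real_toNNReal,
    hdensity, integral_indicator measurableSet_Ici, integral_Ici_eq_integral_Ioi,
    integral_const_mul, integral_exp_mul_Ioi (by linarith), mul_zero, exp_zero,
    neg_div, ← div_neg, neg_sub, mul_one_div]

lemma integrable_exp_mul_expMeasure (hr : 0 < r) (ht : t < r) :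
    Integrable (fun x ↦ exp (t * x)) (expMeasure r) :=
  .of_integral_ne_zero <| by
    rw [integral_exp_mul_expMeasure hr ht]
    exact (div_pos hr (sub_pos.mpr ht)).ne'

variable {Ω : Type*} [MeasurableSpace Ω] {P : Measure Ω}

lemma integrable_exp_mul_of_map_eq_expMeasure {X : Ω → ℝ} (hX : AEMeasurable X P)
    (hXr : P.map X = expMeasure r) (hr : 0 < r) (ht : t < r) :
    Integrable (fun ω ↦ exp (t * X ω)) P := by
  have h := integrable_exp_mul_expMeasure hr ht
  rw [← hXr] at h
  exact h.comp_aemeasurable hX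

lemma mgf_of_map_eq_expMeasure {X : Ω → ℝ} (hX : AEMeasurable X P)
    (hXr : P.map X = expMeasure r) (hr : 0 < r) (ht : t < r) :
    mgf X P t = r / (r - t) := by
  rw [← mgf_id_map hX, hXr, mgf]
  exact integral_exp_mul_expMeasure hr ht

lemma ProbabilityTheory.iIndepFun.measureReal_sum_le_le_of_map_eq_expMeasure {ι : Type*} [Fintype ι]
    {X : ι → Ω → ℝ} {a : ι → ℝ} (hind : iIndepFun X P) (hmeas : ∀ i, Measurable (X i))
    (hdist : ∀ i, P.map (X i) = expMeasure (a i)) (ha : ∀ i, 0 < a i) (ht : t ≤ 0) (ε : ℝ) :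
    P.real {ω | ∑ i, X i ω ≤ ε} ≤ exp (-t * ε) * ∏ i, a i / (a i - t) := by
  have := hind.isProbabilityMeasure
  have ht_lt i : t < a i := ht.trans_lt (ha i)
  have hint := hind.integrable_exp_mul_sum hmeas (s := Finset.univ) fun i _ ↦
    integrable_exp_mul_of_map_eq_expMeasure (hmeas i).aemeasurable (hdist i) (ha i) (ht_lt i)
  have hchernoff := measure_le_le_exp_mul_mgf ε ht hint
  simp only [Finset.sum_apply, hind.mgf_sum hmeas] at hchernoff
  rwa [Finset.prod_congr rfl fun i _ ↦
    mgf_of_map_eq_expMeasure (hmeas i).aemeasurable (hdist i) (ha i) (ht_lt i)] at hchernoff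

end ExponentialDistribution

lemma inv_one_add_mul_le_rpow_neg {u p : ℝ} (hu : -1 < u) (hp0 : 0 ≤ p) (hp1 : p ≤ 1) :
    (1 + p * u)⁻¹ ≤ (1 + u) ^ (-p) := by
  rw [rpow_neg (by linarith)]
  exact inv_anti₀ (rpow_pos_of_pos (by linarith) p) (rpow_one_add_le_one_add_mul_self hu.le hp0 hp1)

lemma div_sub_mul_one_sub_inv_le_rpow_s12 {b r lam : ℝ} (hb : 0 < b) (hbr : b ≤ r) (hlam : 0 < lam) :
    r / (r - b * (1 - lam⁻¹)) ≤ lam ^ (b / r) := by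
  have hr : 0 < r := hb.trans_le hbr
  have key := inv_one_add_mul_le_rpow_neg (u := lam⁻¹ - 1) (p := b / r) (by simp [hlam])
    (by positivity) ((div_le_one hr).mpr hbr)
  have hlhs : (1 + b / r * (lam⁻¹ - 1))⁻¹ = r / (r - b * (1 - lam⁻¹)) := by
    field_simp
    ring
  rwa [hlhs, add_sub_cancel, inv_rpow hlam.le, rpow_neg hlam.le, inv_inv] at key

lemma prod_div_sub_mul_one_sub_inv_le_rpow {ι : Type*} (s : Finset ι) {a : ι → ℝ} {b lam : ℝ}
    (hb : 0 < b) (hba : ∀ i ∈ s, b ≤ a i) (hlam : 0 < lam) :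
    ∏ i ∈ s, a i / (a i - b * (1 - lam⁻¹)) ≤ lam ^ (b * ∑ i ∈ s, 1 / a i) := calc
  _ ≤ ∏ i ∈ s, lam ^ (b / a i) := by
    refine Finset.prod_le_prod (fun i hi ↦ ?_) fun i hi ↦
      div_sub_mul_one_sub_inv_le_rpow_s12 hb (hba i hi) hlam
    have hai := hb.trans_le (hba i hi)
    have hle : b * (1 - lam⁻¹) ≤ b := mul_le_of_le_one_right hb.le (by simp [hlam.le])
    exact div_nonneg hai.le (sub_nonneg.mpr (hle.trans (hba i hi)))
  _ = lam ^ (b * ∑ i ∈ s, 1 / a i) := by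
    rw [← rpow_sum_of_pos hlam, Finset.mul_sum]
    simp only [mul_one_div]

/-- (Janson) Let `X = ∑_{i=1}^m X_i` with `X_i ~ Exp(a_i)` independent,
`μ = E[X] = ∑_i 1/a_i` and `a = min_i a_i`. For any `0 < λ ≤ 1`,
`Pr[X ≤ λμ] ≤ e^{−aμ(λ−1−ln λ)}`. -/
theorem stmt12 {Ω : Type*} [MeasurableSpace Ω] (P : Measure Ω) [IsProbabilityMeasure P]
    (m : ℕ) [NeZero m] (a : Fin m → ℝ) (ha : ∀ i, 0 < a i) (X : Fin m → Ω → ℝ)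
    (hmeas : ∀ i, Measurable (X i))
    (hind : iIndepFun X P)
    (hdist : ∀ i, Measure.map (X i) P = expMeasure (a i))
    (μ aa : ℝ) (hμ : μ = ∑ i, 1 / a i)
    (haa : aa = Finset.univ.inf' Finset.univ_nonempty a)
    (lam : ℝ) (hlam0 : 0 < lam) (hlam1 : lam ≤ 1) :
    P {ω | ∑ i, X i ω ≤ lam * μ} ≤
      ENNReal.ofReal (Real.exp (-(aa * μ * (lam - 1 - Real.log lam)))) := by
  have haa_le : ∀ i ∈ Finset.univ, aa ≤ a i := fun i hi ↦ haa ▸ Finset.inf'_le a hi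
  have haa_pos : 0 < aa := haa ▸ (Finset.lt_inf'_iff _).mpr fun i _ ↦ ha i
  have ht : aa * (1 - lam⁻¹) ≤ 0 :=
    mul_nonpos_of_nonneg_of_nonpos haa_pos.le (sub_nonpos.mpr ((one_le_inv₀ hlam0).mpr hlam1))
  have hchernoff :=
    hind.measureReal_sum_le_le_of_map_eq_expMeasure hmeas hdist ha ht (lam * μ)
  have hprod := prod_div_sub_mul_one_sub_inv_le_rpow Finset.univ haa_pos haa_le hlam0
  rw [← hμ] at hprod
  have hexp : exp (-(aa * (1 - lam⁻¹)) * (lam * μ)) * lam ^ (aa * μ) =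
      exp (-(aa * μ * (lam - 1 - log lam))) := by
    rw [rpow_def_of_pos hlam0, ← exp_add]
    congr 1
    field_simp
    ring
  rw [ENNReal.le_ofReal_iff_toReal_le (measure_ne_top _ _) (exp_pos _).le, ← hexp]
  exact hchernoff.trans (mul_le_mul_of_nonneg_left hprod (exp_pos _).le)
end
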